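/- arXiv:2108.09057 — 2 statements merged into one kernel-verified Lean document; each statement's English description precedes it below -/
import Mathlib

section
/- Let G be a graph containing no two edge-disjoint cycles, and u a vertex of G. Then the induced subgraph on the neighborhood N(u) has at most 3 edges. -/
open Classical in
/-- Adjacency matrix of a simple graph over ℝ. -/
noncomputable def adjMat {V : Type*} [Fintype V] (G : SimpleGraph V) : Matrix V V ℝ :=
  Matrix.of fun i j => if G.Adj i j then (1 : ℝ) else 0

/-- Spectral radius: largest adjacency eigenvalue. -/
noncomputable def specRad {V : Type*} [Fintype V] (G : SimpleGraph V) : ℝ :=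
  sSup {t : ℝ | ∃ x : V → ℝ, x ≠ 0 ∧ (adjMat G).mulVec x = t • x}

/-- `G` contains two edge-disjoint cycles. -/
def HasTwoEdgeDisjointCycles {V : Type*} (G : SimpleGraph V) : Prop :=
  ∃ (u v : V) (c₁ : G.Walk u u) (c₂ : G.Walk v v),
    c₁.IsCycle ∧ c₂.IsCycle ∧ ∀ e ∈ c₁.edges, e ∉ c₂.edges

/-- `G` contains two distinct cycles (as subgraphs) of the same length. -/
def HasTwoCyclesSameLength {V : Type*} [DecidableEq V] (G : SimpleGraph V) : Prop :=
  ∃ (u v : V) (c₁ : G.Walk u u) (c₂ : G.Walk v v),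
    c₁.IsCycle ∧ c₂.IsCycle ∧ c₁.length = c₂.length ∧
      c₁.edges.toFinset ≠ c₂.edges.toFinset

/-- The edge set of a triangle given by a triple of vertices. -/
def triEdges {V : Type*} (t : V × V × V) : Set (Sym2 V) :=
  {s(t.1, t.2.1), s(t.2.1, t.2.2), s(t.1, t.2.2)}

/-- `G` contains `k` pairwise edge-disjoint triangles. -/
def HasEdgeDisjointTriangles {V : Type*} (G : SimpleGraph V) (k : ℕ) : Prop :=
  ∃ T : Fin k → V × V × V,
    (∀ i, G.Adj (T i).1 (T i).2.1 ∧ G.Adj (T i).2.1 (T i).2.2 ∧ G.Adj (T i).1 (T i).2.2) ∧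
    ∀ i j, i ≠ j → Disjoint (triEdges (T i)) (triEdges (T j))

/-- The star `K_{1,n-1}` (center `0`) plus an edge between the leaves `1` and `2`. -/
def starPlus (n : ℕ) : SimpleGraph (Fin n) :=
  SimpleGraph.fromRel (fun x y => x.val = 0 ∨ (x.val < 3 ∧ y.val < 3))

/-- `K₄ • K_{1,n-4}`: `K₄` on `{0,1,2,3}` with `0` joined to everything. -/
def K4Star (n : ℕ) : SimpleGraph (Fin n) :=
  SimpleGraph.fromRel (fun x y => x.val = 0 ∨ (x.val < 4 ∧ y.val < 4))

/-- `K_{3,3} • K_{1,n-6}`: `K_{3,3}` with parts `{0,1,2}`, `{3,4,5}`, and the vertex `0`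
identified with the center of a star with leaves `6,…,n-1`. -/
def K33Star (n : ℕ) : SimpleGraph (Fin n) :=
  SimpleGraph.fromRel (fun x y =>
    (x.val < 3 ∧ 3 ≤ y.val ∧ y.val < 6) ∨ (x.val = 0 ∧ 6 ≤ y.val))

/-- `K_{⌈n/2⌉,⌊n/2⌋}` with a star `K_{1,k-1}` (center `0`, leaves `1,…,k-1`) embedded
in the part `{0,…,⌊n/2⌋-1}` of size `⌊n/2⌋`. -/
def bipStar (n k : ℕ) : SimpleGraph (Fin n) :=
  SimpleGraph.fromRel (fun x y =>
    (x.val < n / 2 ∧ n / 2 ≤ y.val) ∨ (x.val = 0 ∧ 0 < y.val ∧ y.val < k))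

/-- `K_{⌈n/2⌉,⌊n/2⌋}` with a triangle `C₃` on `{0,1,2}` embedded in the part of size `⌊n/2⌋`. -/
def bipTri (n : ℕ) : SimpleGraph (Fin n) :=
  SimpleGraph.fromRel (fun x y =>
    (x.val < n / 2 ∧ n / 2 ≤ y.val) ∨ (x.val < 3 ∧ y.val < 3))

/-- `v` is a cut vertex of `G`. -/
def IsCutVertex {V : Type*} (G : SimpleGraph V) (v : V) : Prop :=
  ∃ a b : ({v}ᶜ : Set V), G.Reachable ↑a ↑b ∧ ¬ (G.induce ({v}ᶜ : Set V)).Reachable a b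

section
open SimpleGraph
lemma tri_cycle {V : Type*} (G : SimpleGraph V) {a b c : V}
    (hab : G.Adj a b) (hbc : G.Adj b c) (hca : G.Adj c a) :
    ((Walk.cons hab (Walk.cons hbc (Walk.cons hca Walk.nil))) : G.Walk a a).IsCycle := by
  have h1 := hab.ne; have h2 := hbc.ne; have h3 := hca.ne
  simp [Walk.isCycle_def, Walk.isTrail_def, Sym2.eq_iff, List.Nodup]
  tauto

lemma quad_cycle {V : Type*} (G : SimpleGraph V) {a b c d : V}
    (hab : G.Adj a b) (hbc : G.Adj b c) (hcd : G.Adj c d) (hda : G.Adj d a)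
    (hac : a ≠ c) (hbd : b ≠ d) :
    ((Walk.cons hab (Walk.cons hbc (Walk.cons hcd (Walk.cons hda Walk.nil)))) : G.Walk a a).IsCycle := by
  have h1 := hab.ne; have h2 := hbc.ne; have h3 := hcd.ne; have h4 := hda.ne
  simp [Walk.isCycle_def, Walk.isTrail_def, Sym2.eq_iff, List.Nodup]
  tauto

lemma two_tri {V : Type*} (G : SimpleGraph V) {u x y x' y' : V}
    (hux : G.Adj u x) (huy : G.Adj u y) (hux' : G.Adj u x') (huy' : G.Adj u y')
    (hxy : G.Adj x y) (hxy' : G.Adj x' y')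
    (h1 : x ≠ x') (h2 : x ≠ y') (h3 : y ≠ x') (h4 : y ≠ y') :
    HasTwoEdgeDisjointCycles G := by
  refine ⟨u, u,
    Walk.cons hux (Walk.cons hxy (Walk.cons huy.symm Walk.nil)),
    Walk.cons hux' (Walk.cons hxy' (Walk.cons huy'.symm Walk.nil)),
    tri_cycle G _ _ _, tri_cycle G _ _ _, ?_⟩
  have n1 := hux'.ne; have n2 := huy'.ne
  simp [Sym2.eq_iff]
  tauto

lemma star3 {V : Type*} (G : SimpleGraph V) {u c d p q : V}
    (huc : G.Adj u c) (hud : G.Adj u d) (hup : G.Adj u p) (huq : G.Adj u q)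
    (hcd : G.Adj c d) (hcp : G.Adj c p) (hcq : G.Adj c q)
    (hdp : d ≠ p) (hdq : d ≠ q) (hpq : p ≠ q) :
    HasTwoEdgeDisjointCycles G := by
  refine ⟨u, u,
    Walk.cons hud (Walk.cons hcd.symm (Walk.cons hcp (Walk.cons hup.symm Walk.nil))),
    Walk.cons huq (Walk.cons hcq.symm (Walk.cons huc.symm Walk.nil)),
    quad_cycle G _ _ _ _ huc.ne hdp, tri_cycle G _ _ _, ?_⟩
  have n1 := huc.ne; have n2 := huq.ne; have n3 := hcq.ne
  have n4 := hcd.ne; have n5 := hcp.ne; have n6 := hud.ne; have n7 := hup.ne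
  simp [Sym2.eq_iff]
  tauto

lemma star3' {V : Type*} (G : SimpleGraph V) {u : V} (c d p q : V)
    (ed ep eq' : Sym2 V) (hd : ed = s(c, d)) (hp : ep = s(c, p)) (hq : eq' = s(c, q))
    (n1 : ed ≠ ep) (n2 : ed ≠ eq') (n3 : ep ≠ eq')
    (huc : G.Adj u c) (hud : G.Adj u d) (hup : G.Adj u p) (huq : G.Adj u q)
    (hcd : G.Adj c d) (hcp : G.Adj c p) (hcq : G.Adj c q) :
    HasTwoEdgeDisjointCycles G := by
  subst hd hp hq
  exact star3 G huc hud hup huq hcd hcp hcq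
    (fun t => n1 (by rw [t])) (fun t => n2 (by rw [t])) (fun t => n3 (by rw [t]))

theorem stmt13 {V : Type*} [Fintype V] [DecidableEq V] (G : SimpleGraph V)
    [DecidableRel G.Adj] (h : ¬ HasTwoEdgeDisjointCycles G) (u : V) :
    (G.edgeFinset.filter (fun e => ∀ x ∈ e, G.Adj u x)).card ≤ 3 := by
  by_contra hc
  push_neg at hc
  apply h
  set S := G.edgeFinset.filter (fun e => ∀ x ∈ e, G.Adj u x) with hSdef
  obtain ⟨e1, he1⟩ := Finset.card_pos.mp (show 0 < S.card by omega)
  obtain ⟨e2, he2⟩ := Finset.card_pos.mp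
    (show 0 < (S.erase e1).card by rw [Finset.card_erase_of_mem he1]; omega)
  obtain ⟨e3, he3⟩ := Finset.card_pos.mp
    (show 0 < ((S.erase e1).erase e2).card by
      rw [Finset.card_erase_of_mem he2, Finset.card_erase_of_mem he1]; omega)
  obtain ⟨e4, he4⟩ := Finset.card_pos.mp
    (show 0 < (((S.erase e1).erase e2).erase e3).card by
      rw [Finset.card_erase_of_mem he3, Finset.card_erase_of_mem he2,
        Finset.card_erase_of_mem he1]; omega)
  obtain ⟨ne21, he2S⟩ := Finset.mem_erase.mp he2
  obtain ⟨ne32, he3'⟩ := Finset.mem_erase.mp he3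
  obtain ⟨ne31, he3S⟩ := Finset.mem_erase.mp he3'
  obtain ⟨ne43, he4'⟩ := Finset.mem_erase.mp he4
  obtain ⟨ne42, he4''⟩ := Finset.mem_erase.mp he4'
  obtain ⟨ne41, he4S⟩ := Finset.mem_erase.mp he4''
  clear he2 he3 he3' he4 he4' he4''
  obtain ⟨a1, b1, rfl⟩ : ∃ a b, e1 = s(a, b) := ⟨e1.out.1, e1.out.2, (e1.out_eq).symm⟩
  obtain ⟨a2, b2, rfl⟩ : ∃ a b, e2 = s(a, b) := ⟨e2.out.1, e2.out.2, (e2.out_eq).symm⟩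
  obtain ⟨a3, b3, rfl⟩ : ∃ a b, e3 = s(a, b) := ⟨e3.out.1, e3.out.2, (e3.out_eq).symm⟩
  obtain ⟨a4, b4, rfl⟩ : ∃ a b, e4 = s(a, b) := ⟨e4.out.1, e4.out.2, (e4.out_eq).symm⟩
  obtain ⟨hE1, hA1⟩ := Finset.mem_filter.mp he1
  obtain ⟨hE2, hA2⟩ := Finset.mem_filter.mp he2S
  obtain ⟨hE3, hA3⟩ := Finset.mem_filter.mp he3S
  obtain ⟨hE4, hA4⟩ := Finset.mem_filter.mp he4S
  have g1 : G.Adj a1 b1 := mem_edgeFinset.mp hE1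
  have g2 : G.Adj a2 b2 := mem_edgeFinset.mp hE2
  have g3 : G.Adj a3 b3 := mem_edgeFinset.mp hE3
  have g4 : G.Adj a4 b4 := mem_edgeFinset.mp hE4
  have ua1 : G.Adj u a1 := hA1 _ (by simp)
  have ub1 : G.Adj u b1 := hA1 _ (by simp)
  have ua2 : G.Adj u a2 := hA2 _ (by simp)
  have ub2 : G.Adj u b2 := hA2 _ (by simp)
  have ua3 : G.Adj u a3 := hA3 _ (by simp)
  have ub3 : G.Adj u b3 := hA3 _ (by simp)
  have ua4 : G.Adj u a4 := hA4 _ (by simp)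
  have ub4 : G.Adj u b4 := hA4 _ (by simp)
  -- if some eᵢ (i ≥ 2) is vertex-disjoint from e₁, we get two edge-disjoint triangles
  by_cases d2 : a1 = a2 ∨ a1 = b2 ∨ b1 = a2 ∨ b1 = b2
  case neg =>
    push_neg at d2
    exact two_tri G ua1 ub1 ua2 ub2 g1 g2 d2.1 d2.2.1 d2.2.2.1 d2.2.2.2
  by_cases d3 : a1 = a3 ∨ a1 = b3 ∨ b1 = a3 ∨ b1 = b3
  case neg =>
    push_neg at d3
    exact two_tri G ua1 ub1 ua3 ub3 g1 g3 d3.1 d3.2.1 d3.2.2.1 d3.2.2.2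
  by_cases d4 : a1 = a4 ∨ a1 = b4 ∨ b1 = a4 ∨ b1 = b4
  case neg =>
    push_neg at d4
    exact two_tri G ua1 ub1 ua4 ub4 g1 g4 d4.1 d4.2.1 d4.2.2.1 d4.2.2.2
  -- normalize: each eᵢ = s(cᵢ, xᵢ) with cᵢ ∈ {a1, b1}
  obtain ⟨c2, x2, hc2, gcx2, ux2, heq2⟩ :
      ∃ c x, (c = a1 ∨ c = b1) ∧ G.Adj c x ∧ G.Adj u x ∧ s(a2, b2) = s(c, x) := by
    rcases d2 with t | t | t | t
    · exact ⟨a2, b2, Or.inl t.symm, g2, ub2, rfl⟩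
    · exact ⟨b2, a2, Or.inl t.symm, g2.symm, ua2, Sym2.eq_swap⟩
    · exact ⟨a2, b2, Or.inr t.symm, g2, ub2, rfl⟩
    · exact ⟨b2, a2, Or.inr t.symm, g2.symm, ua2, Sym2.eq_swap⟩
  obtain ⟨c3, x3, hc3, gcx3, ux3, heq3⟩ :
      ∃ c x, (c = a1 ∨ c = b1) ∧ G.Adj c x ∧ G.Adj u x ∧ s(a3, b3) = s(c, x) := by
    rcases d3 with t | t | t | t
    · exact ⟨a3, b3, Or.inl t.symm, g3, ub3, rfl⟩
    · exact ⟨b3, a3, Or.inl t.symm, g3.symm, ua3, Sym2.eq_swap⟩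
    · exact ⟨a3, b3, Or.inr t.symm, g3, ub3, rfl⟩
    · exact ⟨b3, a3, Or.inr t.symm, g3.symm, ua3, Sym2.eq_swap⟩
  obtain ⟨c4, x4, hc4, gcx4, ux4, heq4⟩ :
      ∃ c x, (c = a1 ∨ c = b1) ∧ G.Adj c x ∧ G.Adj u x ∧ s(a4, b4) = s(c, x) := by
    rcases d4 with t | t | t | t
    · exact ⟨a4, b4, Or.inl t.symm, g4, ub4, rfl⟩
    · exact ⟨b4, a4, Or.inl t.symm, g4.symm, ua4, Sym2.eq_swap⟩
    · exact ⟨a4, b4, Or.inr t.symm, g4, ub4, rfl⟩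
    · exact ⟨b4, a4, Or.inr t.symm, g4.symm, ua4, Sym2.eq_swap⟩
  -- pigeonhole: two of c2, c3, c4 agree; then three edges share that vertex
  rcases hc2 with t2 | t2 <;> rw [t2] at gcx2 heq2 <;> rcases hc3 with t3 | t3 <;>
    rw [t3] at gcx3 heq3
  · exact star3' G a1 b1 x2 x3 _ _ _ rfl heq2 heq3 ne21.symm ne31.symm ne32.symm
      ua1 ub1 ux2 ux3 g1 gcx2 gcx3
  · rcases hc4 with t4 | t4 <;> rw [t4] at gcx4 heq4
    · exact star3' G a1 b1 x2 x4 _ _ _ rfl heq2 heq4 ne21.symm ne41.symm ne42.symm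
        ua1 ub1 ux2 ux4 g1 gcx2 gcx4
    · exact star3' G b1 a1 x3 x4 _ _ _ Sym2.eq_swap heq3 heq4 ne31.symm ne41.symm ne43.symm
        ub1 ua1 ux3 ux4 g1.symm gcx3 gcx4
  · rcases hc4 with t4 | t4 <;> rw [t4] at gcx4 heq4
    · exact star3' G a1 b1 x3 x4 _ _ _ rfl heq3 heq4 ne31.symm ne41.symm ne43.symm
        ua1 ub1 ux3 ux4 g1 gcx3 gcx4
    · exact star3' G b1 a1 x2 x4 _ _ _ Sym2.eq_swap heq2 heq4 ne21.symm ne41.symm ne42.symm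
        ub1 ua1 ux2 ux4 g1.symm gcx2 gcx4
  · exact star3' G b1 a1 x2 x3 _ _ _ Sym2.eq_swap heq2 heq3 ne21.symm ne31.symm ne32.symm
      ub1 ua1 ux2 ux3 g1.symm gcx2 gcx3

end
end

section
/- For n sufficiently large, let G be the graph obtained from K_{⌈n/2⌉,⌊n/2⌋} by embedding a star K_{1,k−1} inside the part of size ⌊n/2⌋. Then G does not contain k edge-disjoint triangles, and ρ(G) > n/2. -/
/-!
Every triangle of `bipStar n k` has two vertices on the same side of the bipartition; the side
of size `⌈n/2⌉` is independent, so these two vertices span an edge of the star, and distinct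
edge-disjoint triangles use distinct star edges, of which there are only `k - 1`.

For the spectral radius, the Rayleigh quotient of the all-ones vector is `2e/n`, which is at most
the largest eigenvalue; with `e = ⌊n/2⌋⌈n/2⌉ + k - 1 ≥ (n² - 1)/4 + 1` this exceeds `n/2`.
-/

open Module.End in
theorem LinearMap.IsSymmetric.exists_hasEigenvalue_ge_rayleigh {𝕜 E : Type*} [RCLike 𝕜]
    [NormedAddCommGroup E] [InnerProductSpace 𝕜 E] [FiniteDimensional 𝕜 E]
    {T : E →ₗ[𝕜] E} (hT : T.IsSymmetric) {x : E} (hx : x ≠ 0) :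
    ∃ μ : ℝ, HasEigenvalue T μ ∧ RCLike.re (inner 𝕜 (T x) x) / ‖x‖ ^ 2 ≤ μ := by
  have : Nontrivial E := ⟨⟨x, 0, hx⟩⟩
  refine ⟨_, hT.hasEigenvalue_iSup_of_finiteDimensional, ?_⟩
  obtain ⟨c, hc⟩ := (LinearMap.toContinuousLinearMap T).bddAbove_rayleighQuotient
  refine le_ciSup (f := fun y : {y : E // y ≠ 0} => RCLike.re (inner 𝕜 (T y) y) / ‖(y : E)‖ ^ 2)
    ⟨c, ?_⟩ ⟨x, hx⟩
  rintro _ ⟨y, rfl⟩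
  exact (le_abs_self _).trans (hc ⟨y, rfl⟩)

open Matrix Module.End in
theorem Matrix.IsHermitian.exists_eigenvalue_ge_rayleigh {V : Type*} [Fintype V] [DecidableEq V]
    {A : Matrix V V ℝ} (hA : A.IsHermitian) {x : V → ℝ} (hx : x ≠ 0) :
    ∃ μ : ℝ, (∃ v, v ≠ 0 ∧ A *ᵥ v = μ • v) ∧ (x ⬝ᵥ A *ᵥ x) / (x ⬝ᵥ x) ≤ μ := by
  obtain ⟨μ, hμ, hle⟩ := (isSymmetric_toEuclideanLin_iff.mpr hA).exists_hasEigenvalue_ge_rayleigh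
    (x := WithLp.toLp 2 x) (by simpa using hx)
  obtain ⟨v, hv, hv0⟩ := hμ.exists_hasEigenvector
  refine ⟨μ, ⟨v.ofLp, by simpa using hv0, ?_⟩, ?_⟩
  · simpa [toLpLin_apply] using congrArg WithLp.ofLp (mem_eigenspace_iff.mp hv)
  · convert hle using 1
    rw [EuclideanSpace.real_norm_sq_eq]
    simp [toLpLin_apply, dotProduct, PiLp.inner_apply, sq]

open Matrix Module.End in
theorem Matrix.bddAbove_eigenvalues {V : Type*} [Fintype V] [DecidableEq V] (A : Matrix V V ℝ) :
    BddAbove {t : ℝ | ∃ x : V → ℝ, x ≠ 0 ∧ A *ᵥ x = t • x} :=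
  (finite_hasEigenvalue (toLin' A)).bddAbove.mono fun _ ⟨x, hx0, hx⟩ =>
    hasEigenvalue_of_hasEigenvector ⟨mem_eigenspace_iff.mpr (by simpa using hx), hx0⟩

open Matrix in
theorem isHermitian_adjMat {V : Type*} [Fintype V] (G : SimpleGraph V) :
    (adjMat G).IsHermitian := by
  ext i j
  simp only [adjMat, conjTranspose_apply, of_apply, star_trivial]
  rw [G.adj_comm]

open Matrix in
theorem rayleigh_le_specRad {V : Type*} [Fintype V] (G : SimpleGraph V) {x : V → ℝ} (hx : x ≠ 0) :
    (x ⬝ᵥ adjMat G *ᵥ x) / (x ⬝ᵥ x) ≤ specRad G := by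
  classical
  obtain ⟨μ, hμ, hle⟩ := (isHermitian_adjMat G).exists_eigenvalue_ge_rayleigh hx
  exact hle.trans (le_csSup (adjMat G).bddAbove_eigenvalues hμ)

open Matrix in
theorem sum_adjMat_div_card_le_specRad {V : Type*} [Fintype V] [Nonempty V] (G : SimpleGraph V) :
    (∑ i, ∑ j, adjMat G i j) / Fintype.card V ≤ specRad G := by
  have hones : (fun _ => 1 : V → ℝ) ≠ 0 :=
    Function.ne_iff.mpr ⟨Classical.arbitrary V, one_ne_zero⟩
  simpa [dotProduct, mulVec] using rayleigh_le_specRad G hones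

theorem bipStar_adj {n k : ℕ} (x y : Fin n) :
    (bipStar n k).Adj x y ↔
      (x.val < n / 2 ∧ n / 2 ≤ y.val) ∨ (y.val < n / 2 ∧ n / 2 ≤ x.val) ∨
        (x.val = 0 ∧ 0 < y.val ∧ y.val < k) ∨ (y.val = 0 ∧ 0 < x.val ∧ x.val < k) := by
  simp only [bipStar, SimpleGraph.fromRel_adj, ne_eq, Fin.ext_iff]
  omega

theorem bipStar_exists_star_edge_eq {n k : ℕ} (hn : 0 < n) {x y : Fin n}
    (hxy : (bipStar n k).Adj x y) (hside : x.val < n / 2 ↔ y.val < n / 2) :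
    ∃ z : Fin n, 0 < z.val ∧ z.val < k ∧ s(⟨0, hn⟩, z) = s(x, y) := by
  rw [bipStar_adj] at hxy
  rcases hxy with h | h | ⟨hx, hy0, hyk⟩ | ⟨hy, hx0, hxk⟩
  · omega
  · omega
  · exact ⟨y, hy0, hyk, by rw [show x = ⟨0, hn⟩ from Fin.ext hx]⟩
  · exact ⟨x, hx0, hxk, by rw [show y = ⟨0, hn⟩ from Fin.ext hy, Sym2.eq_swap]⟩

theorem bipStar_exists_star_edge_mem_triEdges {n k : ℕ} (hn : 0 < n) {a b c : Fin n}
    (hab : (bipStar n k).Adj a b) (hbc : (bipStar n k).Adj b c) (hac : (bipStar n k).Adj a c) :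
    ∃ z : Fin n, 0 < z.val ∧ z.val < k ∧ s(⟨0, hn⟩, z) ∈ triEdges (a, b, c) := by
  have hpigeon : (a.val < n / 2 ↔ b.val < n / 2) ∨ (b.val < n / 2 ↔ c.val < n / 2) ∨
      (a.val < n / 2 ↔ c.val < n / 2) := by
    omega
  rcases hpigeon with h | h | h
  · obtain ⟨z, hz0, hzk, hz⟩ := bipStar_exists_star_edge_eq hn hab h
    exact ⟨z, hz0, hzk, by simp [triEdges, hz]⟩
  · obtain ⟨z, hz0, hzk, hz⟩ := bipStar_exists_star_edge_eq hn hbc h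
    exact ⟨z, hz0, hzk, by simp [triEdges, hz]⟩
  · obtain ⟨z, hz0, hzk, hz⟩ := bipStar_exists_star_edge_eq hn hac h
    exact ⟨z, hz0, hzk, by simp [triEdges, hz]⟩

theorem not_hasEdgeDisjointTriangles_bipStar {n k : ℕ} (hk : 0 < k) :
    ¬ HasEdgeDisjointTriangles (bipStar n k) k := by
  rintro ⟨T, hT, hdisj⟩
  have hn : 0 < n := (T ⟨0, hk⟩).1.pos
  choose z hz0 hzk hmem using fun i =>
    bipStar_exists_star_edge_mem_triEdges hn (hT i).1 (hT i).2.1 (hT i).2.2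
  have hinj : Set.InjOn (fun i => (z i).val) (Finset.univ : Finset (Fin k)) := by
    intro i _ j _ hij
    by_contra hne
    have hz : z i = z j := Fin.ext hij
    exact Set.disjoint_left.mp (hdisj i j hne) (hmem i) (hz ▸ hmem j)
  have hcard := Finset.card_le_card_of_injOn _
    (fun i _ => Finset.mem_Ioo.mpr ⟨hz0 i, hzk i⟩) hinj
  simp only [Finset.card_univ, Fintype.card_fin, Nat.card_Ioo] at hcard
  omega

open Finset in
theorem sum_sum_ite_and_eq_card_mul_card (n : ℕ) (p q : ℕ → Prop) [DecidablePred p]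
    [DecidablePred q] :
    ∑ i : Fin n, ∑ j : Fin n, (if p i ∧ q j then (1 : ℝ) else 0) =
      #{i ∈ range n | p i} * #{j ∈ range n | q j} := by
  have hsplit : ∀ i j : ℕ, (if p i ∧ q j then (1 : ℝ) else 0) =
      (if p i then 1 else 0) * (if q j then 1 else 0) := fun _ _ => by
    rw [ite_zero_mul_ite_zero, one_mul]
  simp_rw [hsplit, ← sum_mul_sum]
  rw [Fin.sum_univ_eq_sum_range (fun i => if p i then (1 : ℝ) else 0),
    Fin.sum_univ_eq_sum_range (fun i => if q i then (1 : ℝ) else 0), sum_boole, sum_boole]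

theorem adjMat_bipStar_apply {n k : ℕ} (hkn : k ≤ n / 2) (i j : Fin n) :
    adjMat (bipStar n k) i j =
      (if i.val < n / 2 ∧ n / 2 ≤ j.val then 1 else 0) +
      (if n / 2 ≤ i.val ∧ j.val < n / 2 then 1 else 0) +
      (if i.val = 0 ∧ (0 < j.val ∧ j.val < k) then 1 else 0) +
      (if (0 < i.val ∧ i.val < k) ∧ j.val = 0 then 1 else 0) := by
  simp only [adjMat, Matrix.of_apply, bipStar_adj]
  split_ifs <;> (try norm_num) <;> omega

open Finset in
theorem sum_adjMat_bipStar {n k : ℕ} (hk : 0 < k) (hkn : k ≤ n / 2) :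
    ∑ i, ∑ j, adjMat (bipStar n k) i j = 2 * ((n / 2 * (n - n / 2) + (k - 1) : ℕ) : ℝ) := by
  simp_rw [adjMat_bipStar_apply hkn, sum_add_distrib]
  rw [sum_sum_ite_and_eq_card_mul_card n (· < n / 2) (n / 2 ≤ ·),
    sum_sum_ite_and_eq_card_mul_card n (n / 2 ≤ ·) (· < n / 2),
    sum_sum_ite_and_eq_card_mul_card n (· = 0) (fun j => 0 < j ∧ j < k),
    sum_sum_ite_and_eq_card_mul_card n (fun i => 0 < i ∧ i < k) (· = 0)]
  have hlow : {i ∈ range n | i < n / 2} = range (n / 2) := by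
    ext; simp only [mem_filter, mem_range]; omega
  have hhigh : {i ∈ range n | n / 2 ≤ i} = Ico (n / 2) n := by
    ext; simp only [mem_filter, mem_range, mem_Ico]; omega
  have hcenter : {i ∈ range n | i = 0} = {0} := by
    ext; simp only [mem_filter, mem_range, mem_singleton]; omega
  have hleaves : {i ∈ range n | 0 < i ∧ i < k} = Ioo 0 k := by
    ext; simp only [mem_filter, mem_range, mem_Ioo]; omega
  rw [hlow, hhigh, hcenter, hleaves]
  simp only [card_range, Nat.card_Ico, card_singleton, Nat.card_Ioo, Nat.sub_zero]
  push_cast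
  ring

theorem mul_self_le_four_mul_div_two_mul_sub_div_two_add_one (n : ℕ) :
    n * n ≤ 4 * (n / 2 * (n - n / 2)) + 1 := by
  rcases Nat.even_or_odd' n with ⟨m, rfl | rfl⟩
  · rw [show 2 * m / 2 = m by omega, show 2 * m - m = m by omega]
    nlinarith
  · rw [show (2 * m + 1) / 2 = m by omega, show 2 * m + 1 - m = m + 1 by omega]
    nlinarith

theorem half_lt_specRad_bipStar {n k : ℕ} (hk : 2 ≤ k) (hkn : k ≤ n / 2) :
    (n : ℝ) / 2 < specRad (bipStar n k) := by
  have hn : 0 < n := by omega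
  have : Nonempty (Fin n) := ⟨⟨0, hn⟩⟩
  have hρ := sum_adjMat_div_card_le_specRad (bipStar n k)
  rw [sum_adjMat_bipStar (by omega) hkn, Fintype.card_fin] at hρ
  refine lt_of_lt_of_le ?_ hρ
  rw [div_lt_div_iff₀ two_pos (by exact_mod_cast hn)]
  have hsq := mul_self_le_four_mul_div_two_mul_sub_div_two_add_one n
  have hcount : n * n < 2 * (n / 2 * (n - n / 2) + (k - 1)) * 2 := by omega
  exact_mod_cast hcount

theorem stmt16 (k : ℕ) (hk : 2 ≤ k) :
    ∃ n₀ : ℕ, ∀ n : ℕ, n₀ ≤ n →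
      ¬ HasEdgeDisjointTriangles (bipStar n k) k ∧
        specRad (bipStar n k) > (n : ℝ) / 2 :=
  ⟨2 * k, fun _ hn =>
    ⟨not_hasEdgeDisjointTriangles_bipStar (by omega), half_lt_specRad_bipStar hk (by omega)⟩⟩
end
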